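/- (Lemma 8, identity (5.10)) Let ρ₁ ∈ ℝ, ρ₂ = −(2/√5)ρ₁, ρ₃ = (2√3/√10)ρ₁, f = ρ₁e₁ + ρ₂e₂ + ρ₃e₃, and let P denote the orthogonal projection of ℝ⁴ onto the null space of L. If g ∈ ℝ⁴ is orthogonal to the null space of L and satisfies Lg = Ve₂ − P(Ve₂), then ⟨g, Vf⟩ = −ρ₁/(4B√5). -/

import Mathlib

/-!
`L = (B/3) w wᵀ` with `w = (√2, -1, -1, √2)`, so `L` has rank one and `ker L = w⊥`.
Pairing `Lg = Ve₂ - P(Ve₂)` with `w` kills the projection and gives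
`⟨w, g⟩ = ⟨w, Ve₂⟩ / ((B/3)‖w‖²)`, while `g ⟂ w⊥` makes `g` a multiple of `w`, so
`⟨g, Vf⟩ = ⟨w, Vf⟩ ⟨w, g⟩ / ‖w‖²`. Since `V` is symmetric, `‖w‖² = 6`, `⟨w, Ve₂⟩ = -1/√5` and
`⟨w, Vf⟩ = 3ρ₁`, which gives `-ρ₁ / (4B√5)`.
-/

open Finset

/-- The linearized collision operator of the one-dimensional Broadwell model with
collision frequency `B`, as a `4 × 4` matrix. -/
noncomputable def LBmat (B : ℝ) : Matrix (Fin 4) (Fin 4) ℝ :=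
  (-(B / 3)) • !![-2, Real.sqrt 2, Real.sqrt 2, -2;
                  Real.sqrt 2, -1, -1, Real.sqrt 2;
                  Real.sqrt 2, -1, -1, Real.sqrt 2;
                  -2, Real.sqrt 2, Real.sqrt 2, -2]

/-- `e₁ = (√2/2, 0, 0, −√2/2)`. -/
noncomputable def eB1 : EuclideanSpace ℝ (Fin 4) :=
  WithLp.toLp 2 ![Real.sqrt 2 / 2, 0, 0, -(Real.sqrt 2 / 2)]

/-- `e₂ = (1/√10, 2/√5, 0, 1/√10)`. -/
noncomputable def eB2 : EuclideanSpace ℝ (Fin 4) :=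
  WithLp.toLp 2 ![1 / Real.sqrt 10, 2 / Real.sqrt 5, 0, 1 / Real.sqrt 10]

/-- `e₃ = (1/√15, −1/√30, √5/√6, 1/√15)`. -/
noncomputable def eB3 : EuclideanSpace ℝ (Fin 4) :=
  WithLp.toLp 2 ![1 / Real.sqrt 15, -(1 / Real.sqrt 30), Real.sqrt 5 / Real.sqrt 6, 1 / Real.sqrt 15]

open scoped RealInnerProductSpace

/-- The Broadwell linearized collision operator as a linear map on `ℝ⁴` with the
Euclidean inner product. -/
noncomputable def LB (B : ℝ) : EuclideanSpace ℝ (Fin 4) →ₗ[ℝ] EuclideanSpace ℝ (Fin 4) :=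
  Matrix.toEuclideanLin (LBmat B)

/-- The diagonal velocity matrix `V = diag(1, 1/2, −1/2, −1)` applied to `f`. -/
noncomputable def VB (f : EuclideanSpace ℝ (Fin 4)) : EuclideanSpace ℝ (Fin 4) :=
  WithLp.toLp 2 ![f 0, f 1 / 2, -(f 2) / 2, -(f 3)]

section RankOne

variable {E : Type*} [NormedAddCommGroup E] [InnerProductSpace ℝ E]
  {T : E →ₗ[ℝ] E} {c : ℝ} {w : E}

theorem inner_eq_zero_of_mem_ker_of_rankOne (hT : ∀ x, T x = (c * ⟪w, x⟫) • w) (hc : c ≠ 0)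
    {x : E} (hx : x ∈ LinearMap.ker T) : ⟪w, x⟫ = 0 := by
  rcases eq_or_ne w 0 with rfl | hw
  · exact inner_zero_left x
  have : (c * ⟪w, x⟫) • w = 0 := (hT x).symm.trans hx
  simpa [hc, hw] using this

theorem sub_smul_mem_ker_of_rankOne (hT : ∀ x, T x = (c * ⟪w, x⟫) • w) (v : E) :
    v - (⟪w, v⟫ / ‖w‖ ^ 2) • w ∈ LinearMap.ker T := by
  rcases eq_or_ne w 0 with rfl | hw
  · simp [hT]
  rw [LinearMap.mem_ker, map_sub, map_smul, hT, hT, real_inner_self_eq_norm_sq, smul_smul,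
    ← sub_smul]
  have : ‖w‖ ≠ 0 := norm_ne_zero_iff.mpr hw
  field_simp
  simp

theorem inner_eq_of_rankOne_of_orthogonal_ker (hT : ∀ x, T x = (c * ⟪w, x⟫) • w) {g : E}
    (hg : ∀ h ∈ LinearMap.ker T, ⟪g, h⟫ = 0) (v : E) :
    ⟪g, v⟫ = ⟪w, v⟫ / ‖w‖ ^ 2 * ⟪w, g⟫ := by
  calc ⟪g, v⟫ = ⟪g, (⟪w, v⟫ / ‖w‖ ^ 2) • w + (v - (⟪w, v⟫ / ‖w‖ ^ 2) • w)⟫ := by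
        rw [add_sub_cancel]
    _ = ⟪w, v⟫ / ‖w‖ ^ 2 * ⟪w, g⟫ := by
        rw [inner_add_right, hg _ (sub_smul_mem_ker_of_rankOne hT v), real_inner_smul_right,
          real_inner_comm w g, add_zero]

theorem inner_eq_div_of_rankOne_apply_eq (hT : ∀ x, T x = (c * ⟪w, x⟫) • w) (hc : c ≠ 0)
    {g u p : E} (hp : p ∈ LinearMap.ker T) (hgu : T g = u - p) :
    ⟪w, g⟫ = ⟪w, u⟫ / (c * ‖w‖ ^ 2) := by
  rcases eq_or_ne w 0 with rfl | hw
  · simp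
  have hwTg : ⟪w, T g⟫ = c * ‖w‖ ^ 2 * ⟪w, g⟫ := by
    rw [hT, real_inner_smul_right, real_inner_self_eq_norm_sq]
    ring
  have : ‖w‖ ≠ 0 := norm_ne_zero_iff.mpr hw
  rw [eq_div_iff (by positivity), mul_comm, ← hwTg, hgu, inner_sub_right,
    inner_eq_zero_of_mem_ker_of_rankOne hT hc hp, sub_zero]

end RankOne

theorem real_inner_fin_four (x y : EuclideanSpace ℝ (Fin 4)) :
    ⟪x, y⟫ = x 0 * y 0 + x 1 * y 1 + x 2 * y 2 + x 3 * y 3 := by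
  simp [PiLp.inner_apply, Fin.sum_univ_four, mul_comm]

noncomputable def wB : EuclideanSpace ℝ (Fin 4) := !₂[Real.sqrt 2, -1, -1, Real.sqrt 2]

theorem LBmat_eq_smul_vecMulVec (B : ℝ) :
    LBmat B = (B / 3) • Matrix.vecMulVec wB.ofLp wB.ofLp := by
  ext i j
  fin_cases i <;> fin_cases j <;> simp [LBmat, Matrix.vecMulVec, wB]

theorem LB_apply (B : ℝ) (x : EuclideanSpace ℝ (Fin 4)) : LB B x = (B / 3 * ⟪wB, x⟫) • wB := by
  ext i
  simp only [LB, LBmat_eq_smul_vecMulVec, map_smul, LinearMap.smul_apply, PiLp.smul_apply,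
    Matrix.ofLp_toLpLin, Matrix.toLin'_apply, Matrix.vecMulVec_mulVec, Pi.smul_apply,
    MulOpposite.smul_eq_mul_unop, MulOpposite.unop_op, smul_eq_mul,
    EuclideanSpace.inner_eq_star_dotProduct, star_trivial, dotProduct_comm]
  ring

theorem norm_wB_sq : ‖wB‖ ^ 2 = 6 := by
  rw [← real_inner_self_eq_norm_sq, real_inner_fin_four]
  simp only [wB, Matrix.cons_val_zero, Matrix.cons_val_one, Matrix.cons_val,
    Real.mul_self_sqrt zero_le_two]
  norm_num

theorem real_inner_VB_comm (x y : EuclideanSpace ℝ (Fin 4)) : ⟪x, VB y⟫ = ⟪VB x, y⟫ := by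
  simp only [real_inner_fin_four, VB, Matrix.cons_val]
  ring

theorem inner_VB_wB_eB1 : ⟪VB wB, eB1⟫ = 2 := by
  simp only [real_inner_fin_four, VB, wB, eB1, Matrix.cons_val_zero, Matrix.cons_val_one,
    Matrix.cons_val]
  linear_combination Real.mul_self_sqrt zero_le_two

theorem inner_VB_wB_eB2 : ⟪VB wB, eB2⟫ = -(1 / Real.sqrt 5) := by
  simp only [real_inner_fin_four, VB, wB, eB2, Matrix.cons_val_zero, Matrix.cons_val_one,
    Matrix.cons_val]
  ring

theorem inner_VB_wB_eB3 : ⟪VB wB, eB3⟫ = 3 / Real.sqrt 30 := by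
  have h30 : Real.sqrt 30 = Real.sqrt 5 * Real.sqrt 6 := by
    rw [← Real.sqrt_mul (by norm_num)]; norm_num
  simp only [real_inner_fin_four, VB, wB, eB3, Matrix.cons_val_zero, Matrix.cons_val_one,
    Matrix.cons_val, h30]
  field_simp
  linear_combination Real.sqrt 15 * Real.sq_sqrt (show (0 : ℝ) ≤ 5 by norm_num)

theorem inner_wB_VB_eq (ρ₁ ρ₂ ρ₃ : ℝ) (h2 : ρ₂ = -(2 / Real.sqrt 5) * ρ₁)
    (h3 : ρ₃ = 2 * Real.sqrt 3 / Real.sqrt 10 * ρ₁) :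
    ⟪wB, VB (ρ₁ • eB1 + ρ₂ • eB2 + ρ₃ • eB3)⟫ = 3 * ρ₁ := by
  have h5 : Real.sqrt 5 ^ 2 = 5 := Real.sq_sqrt (by norm_num)
  have h10_30 : Real.sqrt 10 * Real.sqrt 30 = 10 * Real.sqrt 3 := by
    rw [← Real.sqrt_mul (by norm_num), show (10 : ℝ) * 30 = 10 ^ 2 * 3 by norm_num,
      Real.sqrt_mul (by norm_num), Real.sqrt_sq (by norm_num)]
  rw [real_inner_VB_comm, inner_add_right, inner_add_right, real_inner_smul_right,
    real_inner_smul_right, real_inner_smul_right, inner_VB_wB_eB1, inner_VB_wB_eB2,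
    inner_VB_wB_eB3, h2, h3]
  field_simp
  linear_combination (-4 * Real.sqrt 3 * ρ₁) * h5 + (2 - Real.sqrt 5 ^ 2) * ρ₁ * h10_30

/-- Lemma 8, identity (5.10): with `ρ₂ = −(2/√5)ρ₁`, `ρ₃ = (2√3/√10)ρ₁`,
`f = ρ₁e₁ + ρ₂e₂ + ρ₃e₃` and `P` the orthogonal projection onto the null space of `L`,
if `g ⟂ ker L` and `Lg = Ve₂ − P(Ve₂)`, then `⟨g, Vf⟩ = −ρ₁/(4B√5)`. -/
theorem broadwell_inner_Linv_Ve2 (B : ℝ) (hB : 0 < B) (ρ₁ ρ₂ ρ₃ : ℝ)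
    (h2 : ρ₂ = -(2 / Real.sqrt 5) * ρ₁) (h3 : ρ₃ = 2 * Real.sqrt 3 / Real.sqrt 10 * ρ₁)
    (f : EuclideanSpace ℝ (Fin 4)) (hf : f = ρ₁ • eB1 + ρ₂ • eB2 + ρ₃ • eB3)
    (g : EuclideanSpace ℝ (Fin 4))
    (hg₁ : ∀ h ∈ LinearMap.ker (LB B), ⟪g, h⟫ = 0)
    (hg₂ : LB B g = VB eB2 -
      (Submodule.orthogonalProjectionOnto (LinearMap.ker (LB B)) (VB eB2) : EuclideanSpace ℝ (Fin 4))) :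
    ⟪g, VB f⟫ = -(ρ₁ / (4 * B * Real.sqrt 5)) := by
  rw [inner_eq_of_rankOne_of_orthogonal_ker (LB_apply B) hg₁,
    inner_eq_div_of_rankOne_apply_eq (LB_apply B) (by positivity) (Submodule.coe_mem _) hg₂,
    hf, inner_wB_VB_eq ρ₁ ρ₂ ρ₃ h2 h3, real_inner_VB_comm, inner_VB_wB_eB2, norm_wB_sq]
  field_simp
  ring
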